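/- Let I₀, I₁, J be ideals on an infinite set X with I₀ and I₁ orthogonal (there is A ∈ I₀ with X \ A ∈ I₁). Then cof_J(I₀∩I₁) = max{cof_J(I₀), cof_J(I₁)}. -/

import Mathlib

/-!
Fix `A ∈ I₀` with `Aᶜ ∈ I₁`. Every `B ∈ I₀` splits as `(B \ A) ∪ A` with `B \ A ∈ I₀ ∩ I₁`, so
adding `A` to each member of a `J`-cofinal family of `I₀ ∩ I₁` gives one for `I₀`; symmetrically
for `I₁` with `Aᶜ`. Conversely, gluing `a` off `A` with `b` on `A` for `a`, `b` in cofinal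
families of `I₀`, `I₁` gives a cofinal family of `I₀ ∩ I₁` of size at most `cof_J(I₀) · cof_J(I₁)`.
This product is at most the maximum because a finite `cof_J(I)` is at most `1`: the union of a
finite cofinal family is a single cofinal set.
-/

open Cardinal Set

def IsIdealOn {X : Type*} (I : Set (Set X)) : Prop :=
  (∀ A ∈ I, ∀ B, B ⊆ A → B ∈ I) ∧
  (∀ A ∈ I, ∀ B ∈ I, A ∪ B ∈ I) ∧
  (Set.univ : Set X) ∉ I ∧
  (∀ A : Set X, A.Finite → A ∈ I)

/-- `relCof J I`: least cardinality of a family `𝒜 ⊆ I` such that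
every `I₀ ∈ I` satisfies `I₀ \ A ∈ J` for some `A ∈ 𝒜`. -/
noncomputable def relCof {X : Type*} (J I : Set (Set X)) : Cardinal :=
  sInf {c | ∃ 𝒜 : Set (Set X), 𝒜 ⊆ I ∧ Cardinal.mk 𝒜 = c ∧
    ∀ I₀ ∈ I, ∃ A ∈ 𝒜, I₀ \ A ∈ J}

section

variable {X : Type*} {I I₀ I₁ J K : Set (Set X)} {𝒜 : Set (Set X)} {A B : Set X}

namespace IsIdealOn

theorem mono (hI : IsIdealOn I) (hA : A ∈ I) (hBA : B ⊆ A) : B ∈ I := hI.1 A hA B hBA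

theorem union_mem (hI : IsIdealOn I) (hA : A ∈ I) (hB : B ∈ I) : A ∪ B ∈ I := hI.2.1 A hA B hB

theorem empty_mem (hI : IsIdealOn I) : ∅ ∈ I := hI.2.2.2 ∅ finite_empty

theorem sUnion_mem (hI : IsIdealOn I) (h𝒜 : 𝒜.Finite) (h𝒜I : 𝒜 ⊆ I) : ⋃₀ 𝒜 ∈ I := by
  induction 𝒜, h𝒜 using Set.Finite.induction_on with
  | empty => simpa using hI.empty_mem
  | insert _ _ ih =>
    rw [sUnion_insert]
    exact hI.union_mem (h𝒜I (mem_insert _ _)) (ih ((subset_insert _ _).trans h𝒜I))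

end IsIdealOn

def IsRelCofinal (J I 𝒜 : Set (Set X)) : Prop :=
  𝒜 ⊆ I ∧ ∀ B ∈ I, ∃ A ∈ 𝒜, B \ A ∈ J

theorem relCof_le_mk (h : IsRelCofinal J I 𝒜) : relCof J I ≤ #𝒜 :=
  csInf_le' ⟨𝒜, h.1, rfl, h.2⟩

theorem exists_isRelCofinal_mk_eq_relCof (hJ : ∅ ∈ J) :
    ∃ 𝒜, IsRelCofinal J I 𝒜 ∧ #𝒜 = relCof J I := by
  have hne : {c | ∃ 𝒜 : Set (Set X), 𝒜 ⊆ I ∧ #𝒜 = c ∧ ∀ B ∈ I, ∃ A ∈ 𝒜, B \ A ∈ J}.Nonempty :=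
    ⟨#I, I, subset_rfl, rfl, fun B hB => ⟨B, hB, by rwa [sdiff_self]⟩⟩
  obtain ⟨𝒜, h𝒜I, h𝒜, hcof⟩ := csInf_mem hne
  exact ⟨𝒜, ⟨h𝒜I, hcof⟩, h𝒜⟩

theorem relCof_le_one_of_lt_aleph0 (hI : IsIdealOn I) (hJ : IsIdealOn J)
    (hfin : relCof J I < ℵ₀) : relCof J I ≤ 1 := by
  obtain ⟨𝒜, ⟨h𝒜I, hcof⟩, h𝒜⟩ := exists_isRelCofinal_mk_eq_relCof (I := I) hJ.empty_mem
  have h𝒜fin : 𝒜.Finite := lt_aleph0_iff_set_finite.mp (h𝒜 ▸ hfin)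
  have hU : IsRelCofinal J I {⋃₀ 𝒜} := by
    refine ⟨singleton_subset_iff.mpr (hI.sUnion_mem h𝒜fin h𝒜I), fun B hB => ?_⟩
    obtain ⟨A, hA, hBA⟩ := hcof B hB
    exact ⟨_, rfl, hJ.mono hBA (sdiff_subset_sdiff_right (subset_sUnion_of_mem hA))⟩
  simpa using relCof_le_mk hU

theorem relCof_mul_self_le (hI : IsIdealOn I) (hJ : IsIdealOn J) :
    relCof J I * relCof J I ≤ relCof J I := by
  rcases lt_or_ge (relCof J I) ℵ₀ with hfin | hinf
  · calc relCof J I * relCof J I ≤ relCof J I * 1 :=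
          mul_le_mul_right (relCof_le_one_of_lt_aleph0 hI hJ hfin) _
      _ = relCof J I := mul_one _
  · exact (mul_eq_self hinf).le

theorem relCof_le_relCof_of_diff_mem (hI : IsIdealOn I) (hJ : IsIdealOn J) (hKI : K ⊆ I)
    (hA : A ∈ I) (hdiff : ∀ B ∈ I, B \ A ∈ K) : relCof J I ≤ relCof J K := by
  obtain ⟨𝒜, ⟨h𝒜K, hcof⟩, h𝒜⟩ := exists_isRelCofinal_mk_eq_relCof (I := K) hJ.empty_mem
  have hcofI : IsRelCofinal J I ((A ∪ ·) '' 𝒜) := by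
    refine ⟨?_, fun B hB => ?_⟩
    · rintro _ ⟨C, hC, rfl⟩
      exact hI.union_mem hA (hKI (h𝒜K hC))
    · obtain ⟨C, hC, hBC⟩ := hcof _ (hdiff B hB)
      exact ⟨A ∪ C, mem_image_of_mem _ hC, by rwa [← sdiff_sdiff]⟩
  calc relCof J I ≤ #((A ∪ ·) '' 𝒜) := relCof_le_mk hcofI
    _ ≤ #𝒜 := mk_image_le
    _ = relCof J K := h𝒜

theorem diff_ite_subset (A B a b : Set X) : B \ A.ite b a ⊆ (B \ a) ∪ (B \ b) := by
  intro x
  by_cases hx : x ∈ A <;> simp [Set.ite, hx] <;> tauto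

theorem relCof_inter_le_mul (hI₀ : IsIdealOn I₀) (hI₁ : IsIdealOn I₁) (hJ : IsIdealOn J)
    (hA₀ : A ∈ I₀) (hA₁ : Aᶜ ∈ I₁) : relCof J (I₀ ∩ I₁) ≤ relCof J I₀ * relCof J I₁ := by
  obtain ⟨𝒜₀, ⟨h𝒜₀, hcof₀⟩, hmk₀⟩ := exists_isRelCofinal_mk_eq_relCof (I := I₀) hJ.empty_mem
  obtain ⟨𝒜₁, ⟨h𝒜₁, hcof₁⟩, hmk₁⟩ := exists_isRelCofinal_mk_eq_relCof (I := I₁) hJ.empty_mem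
  have hcof : IsRelCofinal J (I₀ ∩ I₁) (image2 (fun a b => A.ite b a) 𝒜₀ 𝒜₁) := by
    refine ⟨?_, fun B hB => ?_⟩
    · rintro _ ⟨a, ha, b, hb, rfl⟩
      have ha₀ := h𝒜₀ ha
      have hb₁ := h𝒜₁ hb
      exact ⟨hI₀.union_mem (hI₀.mono hA₀ inter_subset_right) (hI₀.mono ha₀ sdiff_subset),
        hI₁.union_mem (hI₁.mono hb₁ inter_subset_left) (hI₁.mono hA₁ fun _ hx => hx.2)⟩
    · obtain ⟨a, ha, hBa⟩ := hcof₀ B hB.1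
      obtain ⟨b, hb, hBb⟩ := hcof₁ B hB.2
      exact ⟨_, mem_image2_of_mem ha hb, hJ.mono (hJ.union_mem hBa hBb) (diff_ite_subset A B a b)⟩
  calc relCof J (I₀ ∩ I₁) ≤ #(image2 (fun a b => A.ite b a) 𝒜₀ 𝒜₁) := relCof_le_mk hcof
    _ ≤ #𝒜₀ * #𝒜₁ := mk_image2_le
    _ = relCof J I₀ * relCof J I₁ := by rw [hmk₀, hmk₁]

end

theorem stmt11_general {X : Type*} (I₀ I₁ J : Set (Set X))
    (hI₀ : IsIdealOn I₀) (hI₁ : IsIdealOn I₁) (hJ : IsIdealOn J)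
    (horth : ∃ A ∈ I₀, Aᶜ ∈ I₁) :
    relCof J (I₀ ∩ I₁) = max (relCof J I₀) (relCof J I₁) := by
  obtain ⟨A, hA₀, hA₁⟩ := horth
  have hle₀ : relCof J I₀ ≤ relCof J (I₀ ∩ I₁) :=
    relCof_le_relCof_of_diff_mem hI₀ hJ inter_subset_left hA₀
      fun B hB => ⟨hI₀.mono hB sdiff_subset, hI₁.mono hA₁ fun _ hx => hx.2⟩
  have hle₁ : relCof J I₁ ≤ relCof J (I₀ ∩ I₁) :=
    relCof_le_relCof_of_diff_mem hI₁ hJ inter_subset_right hA₁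
      fun B hB => ⟨hI₀.mono hA₀ fun _ hx => not_not.mp hx.2, hI₁.mono hB sdiff_subset⟩
  have hmax_sq : max (relCof J I₀) (relCof J I₁) * max (relCof J I₀) (relCof J I₁) ≤
      max (relCof J I₀) (relCof J I₁) := by
    rcases max_choice (relCof J I₀) (relCof J I₁) with h | h <;> rw [h]
    exacts [relCof_mul_self_le hI₀ hJ, relCof_mul_self_le hI₁ hJ]
  refine le_antisymm ?_ (max_le hle₀ hle₁)
  calc relCof J (I₀ ∩ I₁) ≤ relCof J I₀ * relCof J I₁ := relCof_inter_le_mul hI₀ hI₁ hJ hA₀ hA₁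
    _ ≤ max (relCof J I₀) (relCof J I₁) * max (relCof J I₀) (relCof J I₁) :=
      mul_le_mul' (le_max_left _ _) (le_max_right _ _)
    _ ≤ max (relCof J I₀) (relCof J I₁) := hmax_sq

theorem stmt11 {X : Type*} [Infinite X] (I₀ I₁ J : Set (Set X))
    (hI₀ : IsIdealOn I₀) (hI₁ : IsIdealOn I₁) (hJ : IsIdealOn J)
    (horth : ∃ A ∈ I₀, Aᶜ ∈ I₁) :
    relCof J (I₀ ∩ I₁) = max (relCof J I₀) (relCof J I₁) :=
  stmt11_general I₀ I₁ J hI₀ hI₁ hJ horth
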